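/- Let a, b, c be real numbers with b ≠ 0, and let a₀, a₁, a₂ : ℝ → ℝ. Define φ(x̄) = (x̄ − c(1 + a·x̄))/(b(1 + a·x̄)), t(x̄) = 1 + a·x̄, ā₂(x̄) = a₂(φ(x̄))/(b³ t(x̄)⁶), ā₁(x̄) = a₁(φ(x̄))/(b⁴ t(x̄)⁸) − 6a·a₂(φ(x̄))/(b³ t(x̄)⁷), and ā₀(x̄) = a₀(φ(x̄))/(b⁵ t(x̄)¹⁰) − 4a·a₁(φ(x̄))/(b⁴ t(x̄)⁹) + 12a²·a₂(φ(x̄))/(b³ t(x̄)⁸) on {x̄ : t(x̄) ≠ 0}. Then for every x̄ with t(x̄) ≠ 0 and a₂(φ(x̄)) ≠ 0, one has (3ā₀(x̄)ā₂(x̄) − ā₁(x̄)²)³/(27ā₂(x̄)⁸) = (3a₀a₂ − a₁²)³/(27a₂⁸) evaluated at φ(x̄). -/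

import Mathlib

/-- The point transformation of the independent variable:
`φ(x̄) = (x̄ − c(1 + a x̄)) / (b(1 + a x̄))`. -/
noncomputable def phi (a b c : ℝ) (x : ℝ) : ℝ :=
  (x - c * (1 + a * x)) / (b * (1 + a * x))

/-- The transformed coefficient `ā₂(x̄) = a₂(φ(x̄)) / (b³ (1 + a x̄)⁶)`
for the canonical form `y⁽⁵⁾ + a₂ y″ + a₁ y′ + a₀ y = 0`. -/
noncomputable def abar2 (a b c : ℝ) (a2 : ℝ → ℝ) (x : ℝ) : ℝ :=
  a2 (phi a b c x) / (b ^ 3 * (1 + a * x) ^ 6)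

/-- The transformed coefficient
`ā₁(x̄) = a₁(φ(x̄))/(b⁴ (1+a x̄)⁸) − 6a a₂(φ(x̄))/(b³ (1+a x̄)⁷)`. -/
noncomputable def abar1 (a b c : ℝ) (a1 a2 : ℝ → ℝ) (x : ℝ) : ℝ :=
  a1 (phi a b c x) / (b ^ 4 * (1 + a * x) ^ 8)
    - 6 * a * a2 (phi a b c x) / (b ^ 3 * (1 + a * x) ^ 7)

/-- The transformed coefficient
`ā₀(x̄) = a₀(φ(x̄))/(b⁵ (1+a x̄)¹⁰) − 4a a₁(φ(x̄))/(b⁴ (1+a x̄)⁹)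
          + 12a² a₂(φ(x̄))/(b³ (1+a x̄)⁸)`. -/
noncomputable def abar0 (a b c : ℝ) (a0 a1 a2 : ℝ → ℝ) (x : ℝ) : ℝ :=
  a0 (phi a b c x) / (b ^ 5 * (1 + a * x) ^ 10)
    - 4 * a * a1 (phi a b c x) / (b ^ 4 * (1 + a * x) ^ 9)
    + 12 * a ^ 2 * a2 (phi a b c x) / (b ^ 3 * (1 + a * x) ^ 8)

/-!
Under the transformation, `a₂` and `3a₀a₂ − a₁²` are relative invariants: they get divided by
`λ³` and `λ⁸` respectively, with the common multiplier `λ = b (1 + a x̄)²`. Hence the quotient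
of the cube of the second by the eighth power of the first is an absolute invariant.
-/

theorem div_pow_div_mul_div_pow_cancel {K : Type*} [Field K] {l : K} (hl : l ≠ 0)
    (I J c : K) (p q : ℕ) :
    (I / l ^ p) ^ q / (c * (J / l ^ q) ^ p) = I ^ q / (c * J ^ p) := by
  rw [div_pow, div_pow, ← pow_mul, ← pow_mul, mul_comm q p, mul_div_assoc',
    div_div_div_cancel_right₀ (pow_ne_zero _ hl)]

noncomputable def relInvariant5 (A0 A1 A2 : ℝ) : ℝ :=
  3 * A0 * A2 - A1 ^ 2

/-- The paper's `Ψ₅^{0,1}`. -/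
noncomputable def absInvariant5 (A0 A1 A2 : ℝ) : ℝ :=
  relInvariant5 A0 A1 A2 ^ 3 / (27 * A2 ^ 8)

theorem abar2_eq_div_pow (a b c : ℝ) (a2 : ℝ → ℝ) (x : ℝ) :
    abar2 a b c a2 x = a2 (phi a b c x) / (b * (1 + a * x) ^ 2) ^ 3 := by
  rw [abar2, mul_pow, ← pow_mul]

theorem relInvariant5_abar (a c : ℝ) {b : ℝ} (hb : b ≠ 0) (a0 a1 a2 : ℝ → ℝ) {x : ℝ}
    (ht : 1 + a * x ≠ 0) :
    relInvariant5 (abar0 a b c a0 a1 a2 x) (abar1 a b c a1 a2 x) (abar2 a b c a2 x)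
      = relInvariant5 (a0 (phi a b c x)) (a1 (phi a b c x)) (a2 (phi a b c x))
          / (b * (1 + a * x) ^ 2) ^ 8 := by
  simp only [relInvariant5, abar0, abar1, abar2]
  field_simp
  ring

/-- the zeroth-order invariant `Ψ₅^{0,1} = (3a₀a₂ − a₁²)³/(27a₂⁸)` of
the canonical form `y⁽⁵⁾ + a₂ y″ + a₁ y′ + a₀ y = 0` is an absolute invariant of the
structure invariance group. -/
theorem stmt_17 (a b c : ℝ) (hb : b ≠ 0) (a0 a1 a2 : ℝ → ℝ) :
    ∀ xb : ℝ, 1 + a * xb ≠ 0 → a2 (phi a b c xb) ≠ 0 →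
      (3 * abar0 a b c a0 a1 a2 xb * abar2 a b c a2 xb
          - (abar1 a b c a1 a2 xb) ^ 2) ^ 3
        / (27 * (abar2 a b c a2 xb) ^ 8)
      = (3 * a0 (phi a b c xb) * a2 (phi a b c xb)
          - (a1 (phi a b c xb)) ^ 2) ^ 3
        / (27 * (a2 (phi a b c xb)) ^ 8) := by
  intro xb ht _
  change absInvariant5 _ _ _ = absInvariant5 _ _ _
  have hl : b * (1 + a * xb) ^ 2 ≠ 0 := mul_ne_zero hb (pow_ne_zero 2 ht)
  unfold absInvariant5
  rw [relInvariant5_abar a c hb a0 a1 a2 ht, abar2_eq_div_pow,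
    div_pow_div_mul_div_pow_cancel hl]
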